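/- arXiv:1011.0468 — 3 statements merged into one kernel-verified Lean document; each statement's English description precedes it below -/
import Mathlib

section
/- Let G be a finite simple graph with m edges. Then the number of triangles of G is at most 3·m^{3/2}. -/
/-!
Count each triangle at its three vertices: `3 t = ∑ v, t v`, where `t v` is the number of
triangles through `v`. A triangle through `v` is determined by a pair of neighbours of `v`, and
also by the edge opposite to `v`, so `t v ≤ min (deg v ^ 2) m ≤ deg v * √m`. Summing with
`∑ v, deg v = 2 m` gives `3 t ≤ 2 m ^ (3 / 2)`.
-/

open Finset

theorem Real.le_mul_sqrt_of_le_sq_of_le {x a b : ℝ} (hx : 0 ≤ x) (ha : 0 ≤ a)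
    (hxa : x ≤ a ^ 2) (hxb : x ≤ b) : x ≤ a * √b := by
  rw [← Real.sqrt_sq ha, ← Real.sqrt_mul (sq_nonneg a)]
  exact Real.le_sqrt_of_sq_le (by nlinarith)

namespace SimpleGraph

variable {V : Type*} [Fintype V] [DecidableEq V] (G : SimpleGraph V) [DecidableRel G.Adj]

theorem sum_card_filter_mem_cliqueFinset (n : ℕ) :
    ∑ v, #{s ∈ G.cliqueFinset n | v ∈ s} = n * #(G.cliqueFinset n) := by
  calc ∑ v, #{s ∈ G.cliqueFinset n | v ∈ s}
      = ∑ s ∈ G.cliqueFinset n, #{v | v ∈ s} :=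
        sum_card_bipartiteAbove_eq_sum_card_bipartiteBelow (fun v s => v ∈ s)
    _ = ∑ _s ∈ G.cliqueFinset n, n :=
        sum_congr rfl fun s hs => by simpa using (mem_cliqueFinset_iff.mp hs).card_eq
    _ = n * #(G.cliqueFinset n) := by rw [sum_const, smul_eq_mul, mul_comm]

theorem card_filter_mem_cliqueFinset_succ_le_choose_degree (v : V) (n : ℕ) :
    #{s ∈ G.cliqueFinset (n + 1) | v ∈ s} ≤ (G.degree v).choose n := by
  rw [← card_neighborFinset_eq_degree, ← card_powersetCard]
  refine card_le_card_of_injOn (·.erase v) (fun s hs => ?_)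
    ((erase_injOn' v).mono fun _ hs => (mem_filter.mp hs).2)
  obtain ⟨hs, hv⟩ := mem_filter.mp hs
  have hclique := mem_cliqueFinset_iff.mp hs
  refine mem_powersetCard.mpr ⟨fun w hw => ?_, (hclique.erase_of_mem hv).card_eq⟩
  obtain ⟨hwv, hw⟩ := mem_erase.mp hw
  exact (mem_neighborFinset G v w).mpr (hclique.isClique hv hw hwv.symm)

theorem card_filter_mem_cliqueFinset_succ_le (v : V) (n : ℕ) :
    #{s ∈ G.cliqueFinset (n + 1) | v ∈ s} ≤ #(G.cliqueFinset n) :=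
  card_le_card_of_injOn (·.erase v)
    (fun _ hs => mem_cliqueFinset_iff.mpr <|
      (mem_cliqueFinset_iff.mp (mem_filter.mp hs).1).erase_of_mem (mem_filter.mp hs).2)
    ((erase_injOn' v).mono fun _ hs => (mem_filter.mp hs).2)

theorem card_cliqueFinset_two_le_card_edgeFinset :
    #(G.cliqueFinset 2) ≤ #G.edgeFinset := by
  refine card_le_card_of_surjOn Sym2.toFinset fun s hs => ?_
  obtain ⟨hclique, hcard⟩ := mem_cliqueFinset_iff.mp hs
  obtain ⟨x, y, hxy, rfl⟩ := card_eq_two.mp hcard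
  exact ⟨s(x, y), mem_edgeFinset.mpr (hclique (by simp) (by simp) hxy), Sym2.toFinset_mk_eq⟩

theorem card_filter_mem_cliqueFinset_three_le (v : V) :
    (#{s ∈ G.cliqueFinset 3 | v ∈ s} : ℝ) ≤ G.degree v * √(#G.edgeFinset : ℝ) := by
  have hdeg : #{s ∈ G.cliqueFinset 3 | v ∈ s} ≤ G.degree v ^ 2 :=
    (G.card_filter_mem_cliqueFinset_succ_le_choose_degree v 2).trans (Nat.choose_le_pow _ _)
  have hedge : #{s ∈ G.cliqueFinset 3 | v ∈ s} ≤ #G.edgeFinset :=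
    (G.card_filter_mem_cliqueFinset_succ_le v 2).trans G.card_cliqueFinset_two_le_card_edgeFinset
  exact Real.le_mul_sqrt_of_le_sq_of_le (by positivity) (by positivity)
    (by exact_mod_cast hdeg) (by exact_mod_cast hedge)

theorem three_mul_card_cliqueFinset_three_le :
    3 * (#(G.cliqueFinset 3) : ℝ) ≤ 2 * #G.edgeFinset * √(#G.edgeFinset : ℝ) := by
  have hsum : 3 * (#(G.cliqueFinset 3) : ℝ) = ∑ v, (#{s ∈ G.cliqueFinset 3 | v ∈ s} : ℝ) := by
    exact_mod_cast (G.sum_card_filter_mem_cliqueFinset 3).symm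
  have hdeg : ∑ v, (G.degree v : ℝ) = 2 * #G.edgeFinset := by
    exact_mod_cast G.sum_degrees_eq_twice_card_edges
  calc 3 * (#(G.cliqueFinset 3) : ℝ)
      ≤ ∑ v, G.degree v * √(#G.edgeFinset : ℝ) := by
        rw [hsum]; exact sum_le_sum fun v _ => G.card_filter_mem_cliqueFinset_three_le v
    _ = 2 * #G.edgeFinset * √(#G.edgeFinset : ℝ) := by rw [← sum_mul, hdeg]

end SimpleGraph

/-- A finite simple graph with `m` edges has at most `3·m^(3/2)` triangles. -/
theorem triangle_count_le_three_m_pow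
    {V : Type*} [Fintype V] [DecidableEq V]
    (G : SimpleGraph V) [DecidableRel G.Adj]
    (m : ℕ) (hm : m = G.edgeFinset.card) :
    ((G.cliqueFinset 3).card : ℝ) ≤ 3 * (m : ℝ) ^ ((3 : ℝ) / 2) := by
  have hpow : (m : ℝ) ^ ((3 : ℝ) / 2) = m * √(m : ℝ) := by
    rw [Real.sqrt_eq_rpow, ← Real.rpow_one_add' (by positivity) (by norm_num)]
    norm_num
  have hbound := G.three_mul_card_cliqueFinset_three_le
  rw [← hm] at hbound
  rw [hpow]
  have hnonneg : 0 ≤ (m : ℝ) * √(m : ℝ) := by positivity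
  linarith
end

section
/- Let G be a finite simple graph on n vertices with m ≥ 2 edges, let d > 1 be a real number, and let s be an integer with s ≥ d·m^{1/2}·log n. If s edges are sampled independently and uniformly at random (with replacement) from the edge set of G, then with probability at least 1 − n^{1−d}, every vertex of G with degree at least m^{1/2} is an endpoint of at least one sampled edge. -/
open MeasureTheory ProbabilityTheory ENNReal

/-- We endow `Sym2 V` (the type of unordered pairs, containing the edges of a graph)
with the discrete σ-algebra. -/
instance sym2DiscreteMeasurableSpace {α : Type*} : MeasurableSpace (Sym2 α) := ⊤

instance sym2MeasurableSingletonClass {α : Type*} : MeasurableSingletonClass (Sym2 α) :=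
  ⟨fun _ => trivial⟩

/-- The key real inequality: `((m - t)/m)^s ≤ n^(-d)`. -/
lemma real_key_ineq (n m : ℕ) (hm2 : 2 ≤ m) (hn1 : 1 ≤ n)
    (d : ℝ) (hd : 1 < d) (s : ℕ) (hs : d * Real.sqrt m * Real.log n ≤ (s : ℝ))
    (t : ℝ) (hts : Real.sqrt m ≤ t) (htm : t ≤ m) :
    (((m : ℝ) - t) / m) ^ s ≤ (n : ℝ) ^ (-d) := by
  have hm0 : (0:ℝ) < m := by positivity
  have hmr2 : (2:ℝ) ≤ m := by exact_mod_cast hm2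
  have hsq1 : (1:ℝ) ≤ Real.sqrt m := by
    rw [show (1:ℝ) = Real.sqrt 1 by simp]
    exact Real.sqrt_le_sqrt (by linarith)
  have hsq0 : (0:ℝ) < Real.sqrt m := by linarith
  have hx0 : (0:ℝ) ≤ ((m : ℝ) - t) / m := by
    apply div_nonneg (by linarith) (by linarith)
  have hx1 : ((m : ℝ) - t) / m ≤ 1 - 1 / Real.sqrt m := by
    rw [sub_div, div_self (ne_of_gt hm0)]
    have h1 : Real.sqrt m / m ≤ t / m := by
      gcongr
    rw [Real.sqrt_div_self'] at h1
    linarith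
  have hexp1 : 1 - 1 / Real.sqrt m ≤ Real.exp (-(1 / Real.sqrt m)) := by
    have := Real.add_one_le_exp (-(1 / Real.sqrt m))
    linarith
  have hx1' : (0:ℝ) ≤ 1 - 1 / Real.sqrt m := by
    have h : 1 / Real.sqrt m ≤ 1 := by
      rw [div_le_one hsq0]; exact hsq1
    linarith
  calc (((m : ℝ) - t) / m) ^ s ≤ (1 - 1 / Real.sqrt m) ^ s :=
        pow_le_pow_left₀ hx0 hx1 s
    _ ≤ (Real.exp (-(1 / Real.sqrt m))) ^ s := pow_le_pow_left₀ hx1' hexp1 s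
    _ = Real.exp ((s : ℝ) * -(1 / Real.sqrt m)) := by rw [← Real.exp_nat_mul]
    _ ≤ Real.exp (-(d * Real.log n)) := by
        apply Real.exp_le_exp.mpr
        rw [mul_neg, neg_le_neg_iff, mul_one_div, le_div_iff₀ hsq0]
        calc d * Real.log n * Real.sqrt m = d * Real.sqrt m * Real.log n := by ring
          _ ≤ s := hs
    _ = (n : ℝ) ^ (-d) := by
        rw [Real.rpow_def_of_pos (by exact_mod_cast hn1 : (0:ℝ) < n)]
        ring_nf

/-- Sample `s ≥ d·m^(1/2)·log n` edges independently and uniformly at random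
(with replacement) from a finite simple graph `G` with `n` vertices and `m ≥ 2` edges, where
`d > 1`.  Then with probability at least `1 − n^(1−d)`, every vertex of degree at least
`m^(1/2)` is an endpoint of at least one sampled edge. -/
theorem high_degree_vertices_sampled
    {V : Type*} [Fintype V] [DecidableEq V]
    (G : SimpleGraph V) [DecidableRel G.Adj]
    (n m : ℕ) (hn : n = Fintype.card V) (hm : m = G.edgeFinset.card) (hm2 : 2 ≤ m)
    (d : ℝ) (hd : 1 < d)
    (s : ℕ) (hs : d * Real.sqrt m * Real.log n ≤ (s : ℝ))
    (μ : Measure (Fin s → Sym2 V))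
    (hμ : μ = Measure.pi fun _ : Fin s =>
      (PMF.uniformOfFinset G.edgeFinset (Finset.card_pos.mp (by omega))).toMeasure) :
    1 - ENNReal.ofReal ((n : ℝ) ^ ((1 : ℝ) - d)) ≤
      μ {ω : Fin s → Sym2 V |
          ∀ v : V, Real.sqrt m ≤ (G.degree v : ℝ) → ∃ i : Fin s, v ∈ ω i} := by
  classical
  subst hμ
  set ν := (PMF.uniformOfFinset G.edgeFinset (Finset.card_pos.mp (by omega))).toMeasure with hν
  set μpi := Measure.pi fun _ : Fin s => ν with hμpi
  haveI : IsProbabilityMeasure μpi := by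
    rw [hμpi]; infer_instance
  -- every set is measurable
  have hmeasAll : ∀ S : Set (Fin s → Sym2 V), MeasurableSet S := fun S =>
    S.to_countable.measurableSet
  -- V is nonempty, n ≥ 1
  have hVne : Nonempty V := by
    obtain ⟨e, he⟩ := Finset.card_pos.mp (show 0 < G.edgeFinset.card by omega)
    induction e using Sym2.ind with
    | _ a b => exact ⟨a⟩
  have hn1 : 1 ≤ n := by
    rw [hn]; exact Fintype.card_pos
  set H : Finset V := Finset.univ.filter fun v => Real.sqrt m ≤ (G.degree v : ℝ) with hH
  set A : V → Set (Fin s → Sym2 V) := fun v => {ω | ∀ i, v ∉ ω i} with hA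
  set E := {ω : Fin s → Sym2 V |
      ∀ v : V, Real.sqrt m ≤ (G.degree v : ℝ) → ∃ i : Fin s, v ∈ ω i} with hE
  have hEc : Eᶜ ⊆ ⋃ v ∈ H, A v := by
    intro ω hω
    simp only [hE, Set.mem_compl_iff, Set.mem_setOf_eq, not_forall] at hω
    obtain ⟨v, hv, hno⟩ := hω
    push_neg at hno
    exact Set.mem_biUnion (Finset.mem_filter.mpr ⟨Finset.mem_univ v, hv⟩) hno
  -- measure of each bad event
  have hAle : ∀ v ∈ H, μpi (A v) ≤ ENNReal.ofReal ((n:ℝ) ^ (-d)) := by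
    intro v hv
    have hvdeg : Real.sqrt m ≤ (G.degree v : ℝ) := (Finset.mem_filter.mp hv).2
    have hdegm : G.degree v ≤ m := by
      rw [hm, ← SimpleGraph.card_incidenceFinset_eq_degree]
      apply Finset.card_le_card
      intro e he
      rw [SimpleGraph.mem_incidenceFinset] at he
      exact SimpleGraph.mem_edgeFinset.mpr he.1
    have hApi : A v = Set.pi Set.univ (fun _ : Fin s => {e : Sym2 V | v ∉ e}) := by
      ext ω
      simp [hA, Set.mem_pi]
    have hfilter : (G.edgeFinset.filter fun e => v ∉ e).card = m - G.degree v := by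
      have h1 : (G.edgeFinset.filter fun e => v ∈ e).card = G.degree v := by
        rw [← SimpleGraph.card_incidenceFinset_eq_degree]
        congr 1
        rw [SimpleGraph.incidenceFinset_eq_filter]
      have h2 := Finset.card_filter_add_card_filter_not
        (s := G.edgeFinset) (p := fun e => v ∈ e)
      rw [hm]
      omega
    have hν1 : ν {e : Sym2 V | v ∉ e} = ((m - G.degree v : ℕ) : ENNReal) / m := by
      rw [hν, PMF.toMeasure_uniformOfFinset_apply _ _ MeasurableSpace.measurableSet_top, ← hm]
      congr 2
      rw [← hfilter]
      congr 1
      ext e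
      simp
    rw [hApi, Measure.pi_pi]
    simp only [hν1, Finset.prod_const, Finset.card_univ, Fintype.card_fin]
    have heq : (((m - G.degree v : ℕ) : ENNReal) / m) ^ s
        = ENNReal.ofReal ((((m - G.degree v : ℕ) : ℝ) / m) ^ s) := by
      rw [ENNReal.ofReal_pow (by positivity)]
      congr 1
      rw [ENNReal.ofReal_div_of_pos (by positivity)]
      simp [ENNReal.ofReal_natCast]
    rw [heq]
    apply ENNReal.ofReal_le_ofReal
    have hcast : ((m - G.degree v : ℕ) : ℝ) = (m : ℝ) - (G.degree v : ℝ) :=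
      Nat.cast_sub hdegm
    rw [hcast]
    exact real_key_ineq n m hm2 hn1 d hd s hs _ hvdeg (by exact_mod_cast hdegm)
  -- union bound
  have hbound : μpi Eᶜ ≤ ENNReal.ofReal ((n : ℝ) ^ ((1:ℝ) - d)) := by
    have hn0 : (0:ℝ) < n := by exact_mod_cast hn1
    calc μpi Eᶜ ≤ μpi (⋃ v ∈ H, A v) := measure_mono hEc
      _ ≤ ∑ v ∈ H, μpi (A v) := measure_biUnion_finset_le H A
      _ ≤ ∑ _v ∈ H, ENNReal.ofReal ((n:ℝ) ^ (-d)) := Finset.sum_le_sum hAle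
      _ = (H.card : ENNReal) * ENNReal.ofReal ((n:ℝ) ^ (-d)) := by
          rw [Finset.sum_const, nsmul_eq_mul]
      _ ≤ (n : ENNReal) * ENNReal.ofReal ((n:ℝ) ^ (-d)) := by
          gcongr
          have hHn : H.card ≤ n := by
            rw [hn, ← Finset.card_univ]
            exact Finset.card_le_card (Finset.subset_univ H)
          exact_mod_cast hHn
      _ = ENNReal.ofReal ((n : ℝ) ^ ((1:ℝ) - d)) := by
          rw [← ENNReal.ofReal_natCast n, ← ENNReal.ofReal_mul (by positivity)]
          congr 1
          rw [sub_eq_add_neg, Real.rpow_add hn0, Real.rpow_one]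
  calc 1 - ENNReal.ofReal ((n : ℝ) ^ ((1:ℝ) - d)) ≤ 1 - μpi Eᶜ :=
        tsub_le_tsub_left hbound 1
    _ = μpi E := by
        rw [prob_compl_eq_one_sub (hmeasAll E),
          ENNReal.sub_sub_cancel ENNReal.one_ne_top prob_le_one]
end

section
/- Let G be a finite simple graph on n vertices with adjacency matrix A, let R be a k×n random matrix with independent standard Gaussian N(0,1) entries, and define Y = Σ_{(u,v): A_{uv}=1} ⟨R·A_u, R·A_v⟩ (sum over ordered adjacent pairs). Then Var(Y) = 2·k·Σ_{i,j=1}^n ((A³)_{ij})² = 2·k·Tr(A⁶), i.e., Var(Y) equals 2k times the number of closed walks of length 6 in G. -/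
open MeasureTheory ProbabilityTheory Polynomial Matrix
open scoped Kronecker

/-!
With `x_l = R (l, ·)` the rows of `R`, `⟨R A_u, R A_v⟩ = ∑_l (x_l A)_u (x_l A)_v`, so
`Y = ∑_l x_lᵀ A³ x_l = Rᵀ (I_k ⊗ A³) R` is a quadratic form in the standard Gaussian vector `R`
with symmetric matrix `M = I_k ⊗ A³`. By Isserlis' theorem
`cov(R_a R_b, R_c R_d) = δ_ac δ_bd + δ_ad δ_bc`, hence `Var(Rᵀ M R) = 2 ∑ M_ab² = 2k ∑ (A³)_ij²`,
and `∑ (A³)_ij² = tr (A³ A³) = tr A⁶` since `A³` is symmetric. The Gaussian moments entering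
Isserlis' theorem are the derivatives at `0` of the moment generating function `exp (t² / 2)`.
-/

noncomputable def gaussianMomentPoly : ℕ → ℝ[X]
  | 0 => 1
  | n + 1 => derivative (gaussianMomentPoly n) + X * gaussianMomentPoly n

lemma iteratedDeriv_exp_sq_div_two (n : ℕ) :
    iteratedDeriv n (fun t : ℝ => Real.exp (t ^ 2 / 2)) =
      fun t => (gaussianMomentPoly n).eval t * Real.exp (t ^ 2 / 2) := by
  induction n with
  | zero => simp [gaussianMomentPoly]
  | succ n ih =>
    rw [iteratedDeriv_succ, ih]
    funext t
    have hexp : HasDerivAt (fun t : ℝ => Real.exp (t ^ 2 / 2)) (Real.exp (t ^ 2 / 2) * t) t := by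
      simpa using ((hasDerivAt_pow 2 t).div_const 2).exp
    rw [(((gaussianMomentPoly n).hasDerivAt t).fun_mul hexp).deriv]
    simp only [gaussianMomentPoly, eval_add, eval_mul, eval_X]
    ring

lemma zero_mem_interior_integrableExpSet_gaussianReal :
    (0 : ℝ) ∈ interior (integrableExpSet id (gaussianReal 0 1)) := by
  simp [integrableExpSet_id_gaussianReal]

lemma integral_pow_gaussianReal (n : ℕ) :
    ∫ x, x ^ n ∂gaussianReal 0 1 = (gaussianMomentPoly n).eval 0 := by
  have h := iteratedDeriv_mgf_zero zero_mem_interior_integrableExpSet_gaussianReal n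
  simp only [mgf_id_gaussianReal, zero_mul, zero_add, NNReal.coe_one, one_mul,
    iteratedDeriv_exp_sq_div_two] at h
  simpa using h.symm

namespace Matrix

variable {κ ι R : Type*} [CommSemiring R]

lemma isSymm_one_kronecker [DecidableEq κ] {B : Matrix ι ι R} (hB : B.IsSymm) :
    ((1 : Matrix κ κ R) ⊗ₖ B).IsSymm :=
  IsSymm.ext fun p q => by simp [one_apply, eq_comm, hB.apply]

variable [Fintype ι]

lemma dotProduct_mulVec_self_eq_sum (M : Matrix ι ι R) (x : ι → R) :
    x ⬝ᵥ M *ᵥ x = ∑ a, ∑ b, M a b * (x a * x b) := by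
  simp only [dotProduct, mulVec, Finset.mul_sum]
  exact Finset.sum_congr rfl fun a _ => Finset.sum_congr rfl fun b _ => by ring

lemma vecMul_dotProduct_mulVec_vecMul (A M : Matrix ι ι R) (x : ι → R) :
    (x ᵥ* A) ⬝ᵥ M *ᵥ (x ᵥ* A) = x ⬝ᵥ (A * M * Aᵀ) *ᵥ x := by
  rw [← mulVec_mulVec, ← mulVec_mulVec, mulVec_transpose, dotProduct_mulVec x A]

lemma IsSymm.trace_mul_self {B : Matrix ι ι R} (hB : B.IsSymm) :
    trace (B * B) = ∑ i, ∑ j, B i j ^ 2 := by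
  simp only [trace, diag_apply, mul_apply, sq, hB.apply]

variable [Fintype κ] [DecidableEq κ]

lemma dotProduct_one_kronecker_mulVec (B : Matrix ι ι R) (x : κ × ι → R) :
    x ⬝ᵥ ((1 : Matrix κ κ R) ⊗ₖ B) *ᵥ x = ∑ l, (fun i => x (l, i)) ⬝ᵥ B *ᵥ fun i => x (l, i) := by
  simp [dotProduct_mulVec_self_eq_sum, Fintype.sum_prod_type, one_apply, ite_mul]

lemma sum_one_kronecker_sq (B : Matrix ι ι R) :
    ∑ p, ∑ q, ((1 : Matrix κ κ R) ⊗ₖ B) p q ^ 2 = Fintype.card κ * ∑ i, ∑ j, B i j ^ 2 := by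
  simp [Fintype.sum_prod_type, one_apply, ite_pow, Finset.mul_sum]

end Matrix

section StdGaussianPi

variable {ι : Type*} [Fintype ι]

lemma integrable_prod_pow_pi_gaussianReal (m : ι → ℕ) :
    Integrable (fun x => ∏ i, x i ^ m i) (Measure.pi fun _ : ι => gaussianReal 0 1) :=
  Integrable.fintype_prod fun i =>
    integrable_pow_of_mem_interior_integrableExpSet zero_mem_interior_integrableExpSet_gaussianReal
      (m i)

lemma integral_prod_pow_pi_gaussianReal (m : ι → ℕ) :
    ∫ x, ∏ i, x i ^ m i ∂Measure.pi (fun _ : ι => gaussianReal 0 1) =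
      ∏ i, (gaussianMomentPoly (m i)).eval 0 := by
  rw [integral_fintype_prod_eq_prod (fun i (t : ℝ) => t ^ m i)]
  simp only [integral_pow_gaussianReal]

variable [DecidableEq ι]

lemma mul_eq_prod_pow {M : Type*} [CommMonoid M] (x : ι → M) (a b : ι) :
    x a * x b = ∏ i, x i ^ ((if a = i then 1 else 0) + (if b = i then 1 else 0)) := by
  simp only [pow_add, Finset.prod_mul_distrib, pow_ite, pow_one, pow_zero, Finset.prod_ite_eq,
    Finset.mem_univ, if_true]

lemma memLp_mul_pi_gaussianReal (a b : ι) :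
    MemLp (fun x => x a * x b) 2 (Measure.pi fun _ : ι => gaussianReal 0 1) := by
  refine (memLp_two_iff_integrable_sq (by fun_prop)).2 ?_
  simp_rw [mul_eq_prod_pow _ a b, ← Finset.prod_pow, ← pow_mul]
  exact integrable_prod_pow_pi_gaussianReal _

lemma integral_mul_pi_gaussianReal (a b : ι) :
    ∫ x, x a * x b ∂Measure.pi (fun _ : ι => gaussianReal 0 1) = if a = b then 1 else 0 := by
  simp_rw [mul_eq_prod_pow _ a b]
  rw [integral_prod_pow_pi_gaussianReal]
  by_cases hab : a = b
  · subst hab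
    rw [Finset.prod_eq_single a] <;> simp +contextual [gaussianMomentPoly, eq_comm]
  · rw [Finset.prod_eq_zero (Finset.mem_univ a)] <;> simp [hab, Ne.symm hab, gaussianMomentPoly]

lemma integral_mul_mul_mul_pi_gaussianReal (a b c d : ι) :
    ∫ x, x a * x b * (x c * x d) ∂Measure.pi (fun _ : ι => gaussianReal 0 1) =
      (if a = b then 1 else 0) * (if c = d then 1 else 0) +
      (if a = c then 1 else 0) * (if b = d then 1 else 0) +
      (if a = d then 1 else 0) * (if b = c then 1 else 0) := by
  simp_rw [mul_eq_prod_pow _ a b, mul_eq_prod_pow _ c d, ← Finset.prod_mul_distrib, ← pow_add]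
  rw [integral_prod_pow_pi_gaussianReal,
    ← Finset.prod_subset (Finset.subset_univ {a, b, c, d}) fun i _ hi => ?_]
  -- both sides depend only on which of `a, b, c, d` coincide
  · by_cases hab : a = b <;> by_cases hac : a = c <;> by_cases had : a = d <;>
      by_cases hbc : b = c <;> by_cases hbd : b = d <;> by_cases hcd : c = d <;>
      subst_vars <;> simp_all [Finset.prod_insert, gaussianMomentPoly, eq_comm]
  · simp only [Finset.mem_insert, Finset.mem_singleton, not_or] at hi
    simp [Ne.symm hi.1, Ne.symm hi.2.1, Ne.symm hi.2.2.1, Ne.symm hi.2.2.2, gaussianMomentPoly]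

lemma covariance_mul_mul_pi_gaussianReal (a b c d : ι) :
    cov[fun x => x a * x b, fun x => x c * x d; Measure.pi fun _ : ι => gaussianReal 0 1] =
      (if a = c then 1 else 0) * (if b = d then 1 else 0) +
      (if a = d then 1 else 0) * (if b = c then 1 else 0) := by
  rw [covariance_eq_sub (memLp_mul_pi_gaussianReal a b) (memLp_mul_pi_gaussianReal c d)]
  simp only [Pi.mul_apply, integral_mul_mul_mul_pi_gaussianReal, integral_mul_pi_gaussianReal]
  ring

theorem variance_dotProduct_mulVec_pi_gaussianReal {M : Matrix ι ι ℝ} (hM : M.IsSymm) :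
    Var[fun x => x ⬝ᵥ M *ᵥ x; Measure.pi fun _ : ι => gaussianReal 0 1] =
      2 * ∑ a, ∑ b, M a b ^ 2 := by
  simp_rw [dotProduct_mulVec_self_eq_sum, ← Fintype.sum_prod_type']
  rw [variance_fun_sum (X := fun (p : ι × ι) (x : ι → ℝ) => M p.1 p.2 * (x p.1 * x p.2))
    fun p => (memLp_mul_pi_gaussianReal p.1 p.2).const_mul (M p.1 p.2)]
  simp_rw [covariance_const_mul_left, covariance_const_mul_right, covariance_mul_mul_pi_gaussianReal]
  simp only [mul_ite, mul_one, mul_zero, mul_add, Finset.sum_add_distrib, Fintype.sum_prod_type,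
    Finset.sum_ite_eq, Finset.mem_univ, ↓reduceIte, ← sq, Finset.sum_ite_irrel, Finset.sum_const_zero,
    hM.apply]
  ring

end StdGaussianPi

/-- With `A` the adjacency matrix of a finite simple graph `G` and `R`
a `k × n` random matrix with independent standard Gaussian `N(0,1)` entries, the random
variable `Y = Σ_{(u,v) adjacent} ⟨R·A_u, R·A_v⟩` satisfies
`Var(Y) = 2·k·Σ_{i,j} ((A³)_{ij})² = 2·k·Tr(A⁶)` (= `2k` times the number of closed walks
of length 6 in `G`). -/
theorem random_projection_triangle_variance
    {V : Type*} [Fintype V] [DecidableEq V]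
    (G : SimpleGraph V) [DecidableRel G.Adj]
    (A : Matrix V V ℝ) (hA : A = G.adjMatrix ℝ)
    (k : ℕ)
    (μ : Measure (Fin k × V → ℝ))
    (hμ : μ = Measure.pi fun _ : Fin k × V => gaussianReal 0 1)
    (Y : (Fin k × V → ℝ) → ℝ)
    (hY : ∀ R : Fin k × V → ℝ, Y R = ∑ u : V, ∑ v : V,
      if G.Adj u v then
        ∑ l : Fin k, (∑ i : V, R (l, i) * A i u) * (∑ j : V, R (l, j) * A j v)
      else 0) :
    variance Y μ = 2 * (k : ℝ) * ∑ i : V, ∑ j : V, ((A ^ 3) i j) ^ 2 ∧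
      variance Y μ = 2 * (k : ℝ) * Matrix.trace (A ^ 6) := by
  have hAsymm : A.IsSymm := hA ▸ G.isSymm_adjMatrix
  have hA3 : A ^ 3 = A * A * Aᵀ := by rw [hAsymm.eq, pow_three, Matrix.mul_assoc]
  have hYq : Y = fun R => R ⬝ᵥ ((1 : Matrix (Fin k) (Fin k) ℝ) ⊗ₖ (A ^ 3)) *ᵥ R := by
    funext R
    simp_rw [hY, dotProduct_one_kronecker_mulVec, hA3, ← vecMul_dotProduct_mulVec_vecMul,
      dotProduct_mulVec_self_eq_sum]
    symm
    rw [Finset.sum_comm]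
    refine Finset.sum_congr rfl fun u _ => ?_
    rw [Finset.sum_comm]
    refine Finset.sum_congr rfl fun v _ => ?_
    rw [← Finset.mul_sum, hA, SimpleGraph.adjMatrix_apply, ite_mul, one_mul, zero_mul]
    rfl
  have hvar : Var[Y; μ] = 2 * k * ∑ i, ∑ j, (A ^ 3) i j ^ 2 := by
    rw [hμ, hYq, variance_dotProduct_mulVec_pi_gaussianReal (isSymm_one_kronecker (hAsymm.pow 3)),
      sum_one_kronecker_sq, Fintype.card_fin, mul_assoc]
  refine ⟨hvar, ?_⟩
  rw [hvar, show A ^ 6 = A ^ 3 * A ^ 3 by rw [← pow_add], IsSymm.trace_mul_self (hAsymm.pow 3)]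
end
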